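/- arXiv:1808.10228 — 10 statements merged into one kernel-verified Lean document; each statement's English description precedes it below -/
import Mathlib

section
/- Let X be a closed subset of a metric space M and let S be a subset of M∖X that is closed in the subspace M∖X. Then S is closed in M if and only if S ∩ (K∖X) is compact for every compact subset K of M. -/
theorem stmt0 {M : Type*} [MetricSpace M] (X S : Set M) (hX : IsClosed X)
    (hS : S ⊆ Xᶜ) (hS' : IsClosed (Subtype.val ⁻¹' S : Set (Xᶜ : Set M))) :
    IsClosed S ↔ ∀ K : Set M, IsCompact K → IsCompact (S ∩ (K \ X)) := by
  constructor
  · intro h K hK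
    have heq : S ∩ (K \ X) = K ∩ S := by
      ext x
      simp only [Set.mem_inter_iff, Set.mem_diff]
      exact ⟨fun ⟨h1, h2, _⟩ => ⟨h2, h1⟩, fun ⟨h1, h2⟩ => ⟨h2, h1, fun hx => hS h2 hx⟩⟩
    rw [heq]
    exact hK.inter_right h
  · intro h
    rw [← isSeqClosed_iff_isClosed]
    intro u x hu hx
    have hK : IsCompact (insert x (Set.range u)) := hx.isCompact_insert_range
    have hc := h _ hK
    have hmem : x ∈ S ∩ (insert x (Set.range u) \ X) :=
      hc.isClosed.mem_of_tendsto hx (Filter.Eventually.of_forall fun n =>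
        ⟨hu n, Or.inr ⟨n, rfl⟩, fun hxX => hS (hu n) hxX⟩)
    exact hmem.1
end

section
/- Let X be a closed subset of a metric space M and let S be a subset of M∖X that is closed in the subspace M∖X. Then there exists a compact subset K of M with S = K∖X (equivalently, the closure of S in M is compact) if and only if S ∩ F is compact for every subset F ⊆ M∖X that is closed in M. -/
/-!
If `S = K \ X` with `K` compact, then `S ∩ F = K ∩ F` for every closed `F ⊆ Xᶜ`. Conversely, a
sequence `u` in `S` without convergent subsequence would have closed range inside `Xᶜ`, and would
then lie in the compact set `S ∩ range u`, which is absurd; so every sequence in `S` subconverges in `M`, which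
makes `closure S` compact. Finally `closure S \ X = S` because `S` is closed in `Xᶜ`.
-/

open Set Filter Topology

theorem exists_tendsto_subseq_of_forall_isCompact_inter {E : Type*} [TopologicalSpace E]
    [FirstCountableTopology E] [T1Space E] {U S : Set E} (hS : S ⊆ U)
    (h : ∀ F : Set E, F ⊆ U → IsClosed F → IsCompact (S ∩ F)) {u : ℕ → E} (hu : ∀ n, u n ∈ S) :
    ∃ a, ∃ φ : ℕ → ℕ, StrictMono φ ∧ Tendsto (u ∘ φ) atTop (𝓝 a) := by
  by_contra! hno
  have hrange : IsClosed (range u) := isClosed_range_of_not_tendsto hno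
  obtain ⟨a, -, φ, hφ, hlim⟩ := (h _ (range_subset_iff.2 fun n => hS (hu n)) hrange).tendsto_subseq
    fun n => ⟨hu n, n, rfl⟩
  exact hno a φ hφ hlim

theorem isCompact_closure_of_forall_exists_tendsto_subseq {α : Type*} [PseudoMetricSpace α]
    {s : Set α} (h : ∀ u : ℕ → α, (∀ n, u n ∈ s) →
      ∃ a, ∃ φ : ℕ → ℕ, StrictMono φ ∧ Tendsto (u ∘ φ) atTop (𝓝 a)) :
    IsCompact (closure s) := by
  refine IsSeqCompact.isCompact fun u hu => ?_
  choose v hv hdist using fun n : ℕ =>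
    Metric.mem_closure_iff.1 (hu n) (1 / (n + 1)) Nat.one_div_pos_of_nat
  obtain ⟨a, φ, hφ, hva⟩ := h v hv
  refine ⟨a, mem_closure_of_tendsto hva (Eventually.of_forall fun n => hv (φ n)), φ, hφ, ?_⟩
  refine hva.congr_dist (squeeze_zero (fun _ => dist_nonneg) (fun n => ?_)
    (tendsto_one_div_add_atTop_nhds_zero_nat.comp hφ.tendsto_atTop))
  rw [dist_comm]
  exact (hdist (φ n)).le

theorem stmt1_general {M : Type*} [MetricSpace M] (X S : Set M)
    (hS : S ⊆ Xᶜ) (hS' : IsClosed (Subtype.val ⁻¹' S : Set (Xᶜ : Set M))) :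
    (∃ K : Set M, IsCompact K ∧ S = K \ X) ↔
      ∀ F : Set M, F ⊆ Xᶜ → IsClosed F → IsCompact (S ∩ F) := by
  constructor
  · rintro ⟨K, hK, rfl⟩ F hF hFc
    rw [sdiff_eq, inter_assoc, inter_eq_right.2 hF]
    exact hK.inter_right hFc
  · intro h
    refine ⟨closure S, isCompact_closure_of_forall_exists_tendsto_subseq fun u hu =>
      exists_tendsto_subseq_of_forall_isCompact_inter hS h hu, ?_⟩
    have hclosed : Xᶜ ∩ closure (Xᶜ ∩ S) ⊆ S := isClosed_preimage_val.1 hS'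
    rw [inter_eq_right.2 hS] at hclosed
    exact Subset.antisymm (fun x hx => ⟨subset_closure hx, hS hx⟩)
      fun x hx => hclosed ⟨hx.2, hx.1⟩

theorem stmt1 {M : Type*} [MetricSpace M] (X S : Set M) (hX : IsClosed X)
    (hS : S ⊆ Xᶜ) (hS' : IsClosed (Subtype.val ⁻¹' S : Set (Xᶜ : Set M))) :
    (∃ K : Set M, IsCompact K ∧ S = K \ X) ↔
      ∀ F : Set M, F ⊆ Xᶜ → IsClosed F → IsCompact (S ∩ F) :=
  stmt1_general X S hS hS'
end

section
/- Let X be a closed subset of a metric space M, Y a closed subset of a metric space N, and H : (M∖X) × [0,1] → N∖Y a continuous map, where (M∖X) × [0,1] is identified with (M × [0,1])∖(X × [0,1]). Then the following are equivalent: (1) for every open U ⊆ N with Y ⊆ U there exists an open W ⊆ M × [0,1] with X × [0,1] ⊆ W such that H(W ∖ (X × [0,1])) ⊆ U∖Y; (2) for every open U ⊆ N with Y ⊆ U there exists an open V ⊆ M with X ⊆ V such that H((V∖X) × [0,1]) ⊆ U∖Y; (3) for every compact K ⊆ M there exists a compact L ⊆ N with H((K∖X) × [0,1]) ⊆ L∖Y,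 and for every compact K ⊆ M the restriction of H to (K∖X) × [0,1] is a proper map into N∖Y. -/
open Filter Topology Set

private lemma aux_tendsto_one_div {α : Type*} [PseudoMetricSpace α] {u : ℕ → α} {a : α}
    (h : ∀ n : ℕ, dist (u n) a < 1 / (n + 1)) :
    Tendsto u atTop (𝓝 a) := by
  rw [Metric.tendsto_atTop]
  intro ε hε
  obtain ⟨n₀, hn₀⟩ := exists_nat_one_div_lt hε
  refine ⟨n₀, fun n hn => (h n).trans (lt_of_le_of_lt ?_ hn₀)⟩
  have : ((n₀ : ℝ) + 1) ≤ (n : ℝ) + 1 := by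
    have : (n₀ : ℝ) ≤ n := by exact_mod_cast hn
    linarith
  exact one_div_le_one_div_of_le (by positivity) this

private lemma aux_subseq_closure {α : Type*} [MetricSpace α] {q : ℕ → α} {y : α}
    (hy : y ∈ closure (Set.range q)) (hne : ∀ n, q n ≠ y) :
    ∃ φ : ℕ → ℕ, StrictMono φ ∧ Tendsto (fun n => q (φ n)) atTop (𝓝 y) := by
  have hinf : ∀ ε : ℝ, 0 < ε → {k | dist (q k) y < ε}.Infinite := by
    intro ε hε
    by_contra hfin
    rw [Set.not_infinite] at hfin
    have hδ : ∃ δ : ℝ, 0 < δ ∧ ∀ k ∈ {k | dist (q k) y < ε}, δ ≤ dist (q k) y := by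
      rcases hfin.toFinset.eq_empty_or_nonempty with he | hne'
      · refine ⟨1, one_pos, fun k hk => absurd (hfin.mem_toFinset.2 hk) ?_⟩
        simp [he]
      · refine ⟨hfin.toFinset.inf' hne' (fun k => dist (q k) y), ?_, ?_⟩
        · obtain ⟨k, _, hkeq⟩ := hfin.toFinset.exists_mem_eq_inf' hne' (fun k => dist (q k) y)
          rw [hkeq]; exact dist_pos.2 (hne k)
        · intro k hk
          exact Finset.inf'_le _ (hfin.mem_toFinset.2 hk)
    obtain ⟨δ, hδ0, hδle⟩ := hδ
    obtain ⟨b, hbmem, hb⟩ := Metric.mem_closure_iff.1 hy (min δ ε) (lt_min hδ0 hε)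
    obtain ⟨k, rfl⟩ := hbmem
    have hb' : dist (q k) y < min δ ε := by rwa [dist_comm]
    have h1 : dist (q k) y < ε := hb'.trans_le (min_le_right _ _)
    exact absurd (hδle k h1) (not_le.2 (hb'.trans_le (min_le_left _ _)))
  have hfreq : ∀ n : ℕ, ∃ᶠ k in atTop, dist (q k) y < 1 / (n + 1) := by
    intro n
    rw [Filter.frequently_atTop]
    intro a
    obtain ⟨b, hb, hab⟩ := (hinf (1 / (n + 1)) (by positivity)).exists_gt a
    exact ⟨b, hab.le, hb⟩
  obtain ⟨φ, hφ, hdist⟩ := Filter.extraction_forall_of_frequently hfreq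
  exact ⟨φ, hφ, aux_tendsto_one_div hdist⟩

theorem stmt4 {M N : Type*} [MetricSpace M] [MetricSpace N] (X : Set M) (Y : Set N)
    (hX : IsClosed X) (hY : IsClosed Y)
    (H : (Xᶜ : Set M) × unitInterval → (Yᶜ : Set N)) (hH : Continuous H) :
    List.TFAE [
      (∀ U : Set N, IsOpen U → Y ⊆ U →
        ∃ W : Set (M × unitInterval), IsOpen W ∧
          X ×ˢ (Set.univ : Set unitInterval) ⊆ W ∧
          ∀ (x : (Xᶜ : Set M)) (t : unitInterval),
            ((x : M), t) ∈ W → (H (x, t) : N) ∈ U \ Y),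
      (∀ U : Set N, IsOpen U → Y ⊆ U →
        ∃ V : Set M, IsOpen V ∧ X ⊆ V ∧
          ∀ (x : (Xᶜ : Set M)) (t : unitInterval),
            (x : M) ∈ V → (H (x, t) : N) ∈ U \ Y),
      ((∀ K : Set M, IsCompact K →
          ∃ L : Set N, IsCompact L ∧
            ∀ (x : (Xᶜ : Set M)) (t : unitInterval),
              (x : M) ∈ K → (H (x, t) : N) ∈ L \ Y) ∧
        (∀ K : Set M, IsCompact K → ∀ Q : Set N, Q ⊆ Yᶜ → IsCompact Q →
          IsCompact {p : (Xᶜ : Set M) × unitInterval |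
            (p.1 : M) ∈ K ∧ (H p : N) ∈ Q}))] := by
  tfae_have 2 → 1 := by
    intro h2 U hU hYU
    obtain ⟨V, hVo, hXV, hV⟩ := h2 U hU hYU
    exact ⟨V ×ˢ Set.univ, hVo.prod isOpen_univ, Set.prod_mono hXV le_rfl,
      fun x t hxt => hV x t hxt.1⟩
  tfae_have 1 → 2 := by
    intro h1 U hU hYU
    obtain ⟨W, hWo, hXW, hW⟩ := h1 U hU hYU
    have key : ∀ x ∈ X, ∃ u : Set M, IsOpen u ∧ x ∈ u ∧
        u ×ˢ (Set.univ : Set unitInterval) ⊆ W := by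
      intro x hx
      obtain ⟨u, v, hu, _, hxu, hv2, huv⟩ := generalized_tube_lemma isCompact_singleton
        isCompact_univ hWo ((Set.prod_mono (Set.singleton_subset_iff.2 hx) le_rfl).trans hXW)
      exact ⟨u, hu, hxu rfl, (Set.prod_mono le_rfl hv2).trans huv⟩
    choose! u hu hxu huW using key
    refine ⟨⋃ x ∈ X, u x, isOpen_biUnion fun x hx => hu x hx,
      fun x hx => Set.mem_biUnion hx (hxu x hx), ?_⟩
    intro x t hxV
    obtain ⟨z, hz, hxu'⟩ := Set.mem_iUnion₂.1 hxV
    exact hW x t (huW z hz (Set.mk_mem_prod hxu' (Set.mem_univ t)))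
  tfae_have 2 → 3 := by
    intro h2
    -- Key lemma: any sequence whose base points converge to a point of X has a
    -- subsequence whose H-images converge in N.
    have keyA : ∀ (p : ℕ → (Xᶜ : Set M) × unitInterval) (x : M), x ∈ X →
        Tendsto (fun n => ((p n).1 : M)) atTop (𝓝 x) →
        ∃ φ : ℕ → ℕ, StrictMono φ ∧ ∃ l : N,
          Tendsto (fun n => (H (p (φ n)) : N)) atTop (𝓝 l) := by
      intro p x hxX hconv
      by_contra hno
      push_neg at hno
      set q : ℕ → N := fun n => (H (p n) : N) with hq
      have hqY : ∀ n, q n ∉ Y := fun n => (H (p n)).2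
      have hYcl : ∀ y ∈ Y, y ∉ closure (Set.range q) := by
        intro y hyY hycl
        obtain ⟨φ, hφ, hlim⟩ := aux_subseq_closure hycl
          (fun n h => hqY n (h ▸ hyY))
        exact hno φ hφ y hlim
      obtain ⟨V, hVo, hXV, hV⟩ := h2 (closure (Set.range q))ᶜ
        isClosed_closure.isOpen_compl (fun y hy => hYcl y hy)
      have hev : ∀ᶠ n in atTop, ((p n).1 : M) ∈ V := hconv (hVo.mem_nhds (hXV hxX))
      obtain ⟨n, hn⟩ := hev.exists
      exact (hV (p n).1 (p n).2 hn).1 (subset_closure ⟨n, rfl⟩)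
    -- Helper: extract a subsequence of a sequence over a compact base K that either
    -- has base points converging to a point of X, or converges in (Xᶜ × I).
    have helper : ∀ (pp : ℕ → (Xᶜ : Set M) × unitInterval) (K : Set M), IsCompact K →
        (∀ n, ((pp n).1 : M) ∈ K) → ∃ ψ : ℕ → ℕ, StrictMono ψ ∧
          ((∃ x ∈ X, Tendsto (fun n => ((pp (ψ n)).1 : M)) atTop (𝓝 x)) ∨
           (∃ z : (Xᶜ : Set M) × unitInterval,
             Tendsto (fun n => pp (ψ n)) atTop (𝓝 z) ∧ (z.1 : M) ∈ K)) := by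
      intro pp K hK hppK
      obtain ⟨x, hxK, φ₁, hφ₁, hx1⟩ := hK.tendsto_subseq hppK
      obtain ⟨t, φ₂, hφ₂, ht2⟩ := CompactSpace.tendsto_subseq (fun n => (pp (φ₁ n)).2)
      by_cases hxX : x ∈ X
      · refine ⟨φ₁ ∘ φ₂, hφ₁.comp hφ₂, Or.inl ⟨x, hxX, ?_⟩⟩
        exact hx1.comp hφ₂.tendsto_atTop
      · refine ⟨φ₁ ∘ φ₂, hφ₁.comp hφ₂, Or.inr ⟨(⟨x, hxX⟩, t), ?_, hxK⟩⟩
        have hfst : Tendsto (fun n => (pp (φ₁ (φ₂ n))).1) atTop (𝓝 ⟨x, hxX⟩) :=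
          tendsto_subtype_rng.2 (hx1.comp hφ₂.tendsto_atTop)
        exact hfst.prodMk_nhds ht2
    refine ⟨?_, ?_⟩
    · -- 3a
      intro K hK
      set S : Set N := {y | ∃ p : (Xᶜ : Set M) × unitInterval, (p.1 : M) ∈ K ∧ y = (H p : N)}
        with hS
      have hseq : IsSeqCompact (closure S) := by
        intro y hy
        have happrox : ∀ n : ℕ, ∃ s, s ∈ S ∧ dist (y n) s < 1 / (n + 1) := by
          intro n
          obtain ⟨s, hs1, hs2⟩ := Metric.mem_closure_iff.1 (hy n) _
            (by positivity : (0:ℝ) < 1 / (n + 1))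
          exact ⟨s, hs1, hs2⟩
        choose s hsS hsd using happrox
        have hsS' : ∀ n, ∃ p : (Xᶜ : Set M) × unitInterval, (p.1 : M) ∈ K ∧ s n = (H p : N) :=
          fun n => hsS n
        choose pp hppK hpps using hsS'
        obtain ⟨ψ, hψ, hcase⟩ := helper pp K hK hppK
        have main : ∃ θ : ℕ → ℕ, StrictMono θ ∧ ∃ l : N,
            Tendsto (fun n => (H (pp (θ n)) : N)) atTop (𝓝 l) := by
          rcases hcase with ⟨x, hxX, hxt⟩ | ⟨z, hz, _⟩
          · obtain ⟨φ₃, hφ₃, l, hl⟩ := keyA (fun n => pp (ψ n)) x hxX hxt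
            exact ⟨ψ ∘ φ₃, hψ.comp hφ₃, l, hl⟩
          · refine ⟨ψ, hψ, (H z : N), ?_⟩
            exact ((continuous_subtype_val.comp hH).tendsto z).comp hz
        obtain ⟨θ, hθ, l, hl⟩ := main
        have hsl : Tendsto (fun n => s (θ n)) atTop (𝓝 l) := by
          have : (fun n => s (θ n)) = fun n => (H (pp (θ n)) : N) := by
            funext n; exact hpps (θ n)
          rw [this]; exact hl
        have hyl : Tendsto (fun n => y (θ n)) atTop (𝓝 l) := by
          rw [Metric.tendsto_atTop] at hsl ⊢
          intro ε hε
          obtain ⟨n₁, hn₁⟩ := hsl (ε / 2) (by linarith)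
          obtain ⟨n₂, hn₂⟩ := exists_nat_one_div_lt (by linarith : (0:ℝ) < ε / 2)
          refine ⟨max n₁ n₂, fun n hn => ?_⟩
          have h1 : dist (s (θ n)) l < ε / 2 := hn₁ n (le_trans (le_max_left _ _) hn)
          have h2 : dist (y (θ n)) (s (θ n)) < 1 / (θ n + 1) := hsd (θ n)
          have h3 : (1 : ℝ) / (θ n + 1) ≤ 1 / (n₂ + 1) := by
            apply one_div_le_one_div_of_le (by positivity)
            have : (n₂ : ℝ) ≤ θ n := by
              exact_mod_cast le_trans (le_trans (le_max_right n₁ n₂) hn) hθ.le_apply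
            linarith
          calc dist (y (θ n)) l ≤ dist (y (θ n)) (s (θ n)) + dist (s (θ n)) l :=
                dist_triangle _ _ _
            _ < 1 / (n₂ + 1) + ε / 2 := by linarith [h2.trans_le h3]
            _ < ε / 2 + ε / 2 := by linarith
            _ = ε := by ring
        refine ⟨l, ?_, θ, hθ, hyl⟩
        exact mem_closure_of_tendsto hsl (Filter.Eventually.of_forall fun n =>
          hsS (θ n))
      refine ⟨closure S, hseq.isCompact, fun x t hx => ⟨subset_closure ⟨(x, t), hx, rfl⟩,
        (H (x, t)).2⟩⟩
    · -- 3b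
      intro K hK Q hQY hQ
      have hseq : IsSeqCompact {p : (Xᶜ : Set M) × unitInterval |
          (p.1 : M) ∈ K ∧ (H p : N) ∈ Q} := by
        intro p hp
        obtain ⟨ψ, hψ, hcase⟩ := helper p K hK (fun n => (hp n).1)
        rcases hcase with ⟨x, hxX, hxt⟩ | ⟨z, hz, hzK⟩
        · exfalso
          obtain ⟨V, hVo, hXV, hV⟩ := h2 Qᶜ hQ.isClosed.isOpen_compl
            (fun y hy hyQ => hQY hyQ hy)
          have hev : ∀ᶠ n in atTop, ((p (ψ n)).1 : M) ∈ V := hxt (hVo.mem_nhds (hXV hxX))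
          obtain ⟨n, hn⟩ := hev.exists
          exact (hV (p (ψ n)).1 (p (ψ n)).2 hn).1 (hp (ψ n)).2
        · refine ⟨z, ⟨hzK, ?_⟩, ψ, hψ, hz⟩
          have htend : Tendsto (fun n => (H (p (ψ n)) : N)) atTop (𝓝 (H z : N)) :=
            ((continuous_subtype_val.comp hH).tendsto z).comp hz
          exact hQ.isClosed.mem_of_tendsto htend
            (Filter.Eventually.of_forall fun n => (hp (ψ n)).2)
      exact hseq.isCompact
  tfae_have 3 → 2 := by
    rintro ⟨h3a, h3b⟩ U hU hYU
    have key : ∀ x ∈ X, ∃ r : ℝ, 0 < r ∧ ∀ (x' : (Xᶜ : Set M)) (t : unitInterval),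
        (x' : M) ∈ Metric.ball x r → (H (x', t) : N) ∈ U := by
      intro x hx
      by_contra hcon
      push_neg at hcon
      have hseq : ∀ n : ℕ, ∃ p : (Xᶜ : Set M) × unitInterval,
          dist ((p.1 : M)) x < 1 / (n + 1) ∧ (H p : N) ∉ U := by
        intro n
        obtain ⟨x', t, hball, hnU⟩ := hcon (1 / (n + 1)) (by positivity)
        exact ⟨(x', t), Metric.mem_ball.1 hball, hnU⟩
      choose p hpd hpU using hseq
      have hconv : Tendsto (fun n => ((p n).1 : M)) atTop (𝓝 x) := aux_tendsto_one_div hpd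
      have hK : IsCompact (insert x (Set.range (fun n => ((p n).1 : M)))) :=
        hconv.isCompact_insert_range
      obtain ⟨L, hL, hLmem⟩ := h3a _ hK
      have hQ : IsCompact (L ∩ Uᶜ) := hL.inter_right hU.isClosed_compl
      have hQY : L ∩ Uᶜ ⊆ Yᶜ := fun y hy hyY => hy.2 (hYU hyY)
      have hPcomp := h3b _ hK (L ∩ Uᶜ) hQY hQ
      have hpP : ∀ n, p n ∈ {pq : (Xᶜ : Set M) × unitInterval |
          (pq.1 : M) ∈ insert x (Set.range (fun n => ((p n).1 : M))) ∧
          (H pq : N) ∈ L ∩ Uᶜ} := by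
        intro n
        refine ⟨Set.mem_insert_iff.2 (Or.inr ⟨n, rfl⟩), ?_, hpU n⟩
        exact (hLmem (p n).1 (p n).2 (Set.mem_insert_iff.2 (Or.inr ⟨n, rfl⟩))).1
      obtain ⟨z, _, φ, hφ, hzt⟩ := hPcomp.tendsto_subseq hpP
      have h1 : Tendsto (fun n => ((p (φ n)).1 : M)) atTop (𝓝 (z.1 : M)) :=
        ((continuous_subtype_val.comp continuous_fst).tendsto z).comp hzt
      have h2' : Tendsto (fun n => ((p (φ n)).1 : M)) atTop (𝓝 x) :=
        hconv.comp hφ.tendsto_atTop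
      have hzx : (z.1 : M) = x := tendsto_nhds_unique h1 h2'
      exact z.1.2 (hzx ▸ hx)
    choose! r hr hrU using key
    refine ⟨⋃ x ∈ X, Metric.ball x (r x), isOpen_biUnion fun _ _ => Metric.isOpen_ball,
      fun x hx => Set.mem_biUnion hx (Metric.mem_ball_self (hr x hx)), ?_⟩
    intro x t hxV
    obtain ⟨z, hz, hxb⟩ := Set.mem_iUnion₂.1 hxV
    exact ⟨hrU z hz x t hxb, (H (x, t)).2⟩
  tfae_finish
end

section
/- Let K be a compact subset of the countable product ℝ^ℕ (with the product topology) and let d be the metric d(x,y) = Σ_{n∈ℕ} 2^{-n} · min(1, |x n − y n|) on ℝ^ℕ. Then for every ε > 0 there exists a continuous map g : ℝ^ℕ → ℝ^ℕ such that d(g(x), x) ≤ ε for all x ∈ ℝ^ℕ and the image of g is disjoint from K. -/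
/-- The metric `d(x,y) = Σ_{n∈ℕ} 2^{-n} · min(1, |x n − y n|)` on `ℝ^ℕ`
(which induces the product topology). -/
noncomputable def dSeq (x y : ℕ → ℝ) : ℝ :=
  ∑' n : ℕ, (2 : ℝ) ^ (-(n : ℤ)) * min 1 |x n - y n|

theorem stmt8 (K : Set (ℕ → ℝ)) (hK : IsCompact K) :
    ∀ ε > (0 : ℝ), ∃ g : (ℕ → ℝ) → (ℕ → ℝ), Continuous g ∧
      (∀ x, dSeq (g x) x ≤ ε) ∧ ∀ x, g x ∉ K := by
  intro ε hε
  -- choose N with 2^{-N} ≤ ε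
  obtain ⟨N, hN⟩ : ∃ N : ℕ, (2 : ℝ) ^ (-(N : ℤ)) ≤ ε := by
    obtain ⟨n, hn⟩ := exists_pow_lt_of_lt_one hε (by norm_num : (1/2 : ℝ) < 1)
    refine ⟨n, le_of_lt ?_⟩
    rw [zpow_neg, zpow_natCast, ← one_div]
    simpa [div_pow] using hn
  -- bound the N-th coordinates of K above
  obtain ⟨M, hM⟩ : ∃ M : ℝ, ∀ y ∈ K, y N ≤ M := by
    obtain ⟨M, hM⟩ := (hK.image (continuous_apply N)).bddAbove
    exact ⟨M, fun y hy => hM ⟨y, hy, rfl⟩⟩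
  refine ⟨fun x n => if n = N then max (x n) (M + 1) else x n, ?_, ?_, ?_⟩
  · refine continuous_pi fun n => ?_
    by_cases h : n = N
    · simp only [h, if_true]
      exact (continuous_apply N).max continuous_const
    · simp only [if_neg h]
      exact continuous_apply n
  · intro x
    have hterm : ∀ n : ℕ, n ≠ N →
        (2 : ℝ) ^ (-(n : ℤ)) *
          min 1 |(if n = N then max (x n) (M + 1) else x n) - x n| = 0 := by
      intro n hn
      simp [hn]
    calc dSeq (fun n => if n = N then max (x n) (M + 1) else x n) x
        = (2 : ℝ) ^ (-(N : ℤ)) *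
            min 1 |(if N = N then max (x N) (M + 1) else x N) - x N| :=
          tsum_eq_single N hterm
      _ ≤ (2 : ℝ) ^ (-(N : ℤ)) * 1 := by
          refine mul_le_mul_of_nonneg_left (min_le_left _ _) (by positivity)
      _ ≤ ε := by rwa [mul_one]
  · intro x hx
    have h1 := hM _ hx
    simp only [if_pos rfl] at h1
    have : M + 1 ≤ M := le_trans (le_max_right _ _) h1
    linarith
end

section
/- Let d be the metric d(x,y) = Σ_{n∈ℕ} 2^{-n} · min(1, |x n − y n|) on ℝ^ℕ. For every m ∈ ℕ, all continuous maps f₁, f₂ : [0,1]^m → ℝ^ℕ and every ε > 0, there exist continuous maps g₁, g₂ : [0,1]^m → ℝ^ℕ such that d(gᵢ(p), fᵢ(p)) ≤ ε for all p ∈ [0,1]^m and i ∈ {1,2}, and the images g₁([0,1]^m) and g₂([0,1]^m) are disjoint. -/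
lemma dSeq_le_of_forall_ne {x y : ℕ → ℝ} {n : ℕ} (h : ∀ k ≠ n, x k = y k) :
    dSeq x y ≤ 2 ^ (-(n : ℤ)) := by
  rw [dSeq, tsum_eq_single n fun k hk => by simp [h k hk]]
  exact mul_le_of_le_one_right (by positivity) (min_le_left _ _)

lemma dSeq_update_le (x : ℕ → ℝ) (n : ℕ) (a : ℝ) :
    dSeq (Function.update x n a) x ≤ 2 ^ (-(n : ℤ)) :=
  dSeq_le_of_forall_ne fun _ hk => Function.update_of_ne hk _ _

lemma exists_two_zpow_neg_le {ε : ℝ} (hε : 0 < ε) : ∃ n : ℕ, (2 : ℝ) ^ (-(n : ℤ)) ≤ ε := by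
  obtain ⟨n, hn⟩ := exists_pow_lt_of_lt_one hε (by norm_num : (2⁻¹ : ℝ) < 1)
  exact ⟨n, by simpa [zpow_neg, inv_pow] using hn.le⟩

theorem stmt9 (m : ℕ) (f₁ f₂ : (Fin m → unitInterval) → (ℕ → ℝ))
    (hf₁ : Continuous f₁) (hf₂ : Continuous f₂) :
    ∀ ε > (0 : ℝ), ∃ g₁ g₂ : (Fin m → unitInterval) → (ℕ → ℝ),
      Continuous g₁ ∧ Continuous g₂ ∧
      (∀ p, dSeq (g₁ p) (f₁ p) ≤ ε) ∧ (∀ p, dSeq (g₂ p) (f₂ p) ≤ ε) ∧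
      Disjoint (Set.range g₁) (Set.range g₂) := by
  intro ε hε
  obtain ⟨n, hn⟩ := exists_two_zpow_neg_le hε
  refine ⟨fun p => Function.update (f₁ p) n 0, fun p => Function.update (f₂ p) n 1,
    hf₁.update n continuous_const, hf₂.update n continuous_const,
    fun p => (dSeq_update_le _ n 0).trans hn, fun p => (dSeq_update_le _ n 1).trans hn, ?_⟩
  rw [Set.disjoint_left]
  rintro _ ⟨p, rfl⟩ ⟨q, hq⟩
  simpa using congrFun hq n
end

section
/- Let E = {x ∈ ℝ^ℕ : x n = 0 for every even n} and let d be the metric d(x,y) = Σ_{n∈ℕ} 2^{-n} · min(1, |x n − y n|) on ℝ^ℕ. Then E is closed in ℝ^ℕ, and for every ε > 0 there exists a continuous map g : ℝ^ℕ → ℝ^ℕ with d(g(x), x) ≤ ε for all x ∈ ℝ^ℕ and with image disjoint from E. -/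
theorem stmt10 :
    IsClosed {x : ℕ → ℝ | ∀ n, Even n → x n = 0} ∧
    ∀ ε > (0 : ℝ), ∃ g : (ℕ → ℝ) → (ℕ → ℝ), Continuous g ∧
      (∀ x, dSeq (g x) x ≤ ε) ∧
      ∀ x, g x ∉ {y : ℕ → ℝ | ∀ n, Even n → y n = 0} := by
  constructor
  · have h : {x : ℕ → ℝ | ∀ n, Even n → x n = 0} =
        ⋂ (n : ℕ) (_ : Even n), (fun x : ℕ → ℝ => x n) ⁻¹' {0} := by
      ext x; simp [Set.mem_iInter]
    rw [h]
    exact isClosed_iInter fun n => isClosed_iInter fun _ =>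
      isClosed_singleton.preimage (continuous_apply n)
  · intro ε hε
    obtain ⟨k, hk⟩ := exists_pow_lt_of_lt_one hε (by norm_num : (1 / 2 : ℝ) < 1)
    set n₀ : ℕ := 2 * k with hn₀
    have hbound : (2 : ℝ) ^ (-(n₀ : ℤ)) ≤ ε := by
      have h1 : (2 : ℝ) ^ (-(n₀ : ℤ)) = (1 / 2 : ℝ) ^ n₀ := by
        rw [zpow_neg, ← zpow_natCast]
        simp [div_pow]
      have h2 : ((1 : ℝ) / 2) ^ n₀ ≤ (1 / 2 : ℝ) ^ k := by
        apply pow_le_pow_of_le_one (by norm_num) (by norm_num)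
        omega
      linarith
    refine ⟨fun x => Function.update x n₀ (max (x n₀) 1), ?_, ?_, ?_⟩
    · apply continuous_pi
      intro m
      by_cases hm : m = n₀
      · have : (fun x : ℕ → ℝ => Function.update x n₀ (max (x n₀) 1) m) =
            fun x => max (x n₀) 1 := by
          funext x; rw [hm, Function.update_self]
        exact this ▸ ((continuous_apply n₀).max continuous_const)
      · have : (fun x : ℕ → ℝ => Function.update x n₀ (max (x n₀) 1) m) =
            fun x => x m := by
          funext x; rw [Function.update_of_ne hm]
        exact this ▸ continuous_apply m
    · intro x
      have hsum : dSeq (Function.update x n₀ (max (x n₀) 1)) x =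
          (2 : ℝ) ^ (-(n₀ : ℤ)) * min 1 |max (x n₀) 1 - x n₀| := by
        unfold dSeq
        rw [tsum_eq_single n₀]
        · simp [Function.update_self]
        · intro m hm
          simp [Function.update_of_ne hm]
      rw [hsum]
      calc (2 : ℝ) ^ (-(n₀ : ℤ)) * min 1 |max (x n₀) 1 - x n₀|
          ≤ (2 : ℝ) ^ (-(n₀ : ℤ)) * 1 := by
            apply mul_le_mul_of_nonneg_left (min_le_left _ _) (by positivity)
        _ ≤ ε := by rw [mul_one]; exact hbound
    · intro x hx
      have h0 : max (x n₀) 1 = 0 := by simpa using hx n₀ ⟨k, by omega⟩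
      linarith [le_max_right (x n₀) 1]
end

section
/- Every Polish space X is homeomorphic to a closed subset Z of ℝ^ℕ such that for every ε > 0 there exists a continuous map g : ℝ^ℕ → ℝ^ℕ with d(g(x), x) ≤ ε for all x ∈ ℝ^ℕ and with image disjoint from Z, where d is the metric d(x,y) = Σ_{n∈ℕ} 2^{-n} · min(1, |x n − y n|). -/
open Filter Function Set Topology TopologicalSpace

section Interleave

variable {α : Type*}

def interleave (a b : ℕ → α) : ℕ → α := fun n => if Even n then a (n / 2) else b (n / 2)

@[simp]
lemma interleave_two_mul (a b : ℕ → α) (n : ℕ) : interleave a b (2 * n) = a n := by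
  simp [interleave]

@[simp]
lemma interleave_two_mul_add_one (a b : ℕ → α) (n : ℕ) : interleave a b (2 * n + 1) = b n := by
  simp [interleave, show (2 * n + 1) / 2 = n by omega]

variable [TopologicalSpace α]

lemma continuous_interleave : Continuous fun p : (ℕ → α) × (ℕ → α) => interleave p.1 p.2 :=
  continuous_pi fun n => by unfold interleave; split_ifs <;> fun_prop

variable [T2Space α]

lemma isClosedEmbedding_interleave :
    IsClosedEmbedding fun p : (ℕ → α) × (ℕ → α) => interleave p.1 p.2 :=
  LeftInverse.isClosedEmbedding (f := fun q => (fun n => q (2 * n), fun n => q (2 * n + 1)))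
    (fun p => by simp) (by fun_prop) continuous_interleave

lemma isClosedEmbedding_interleave_left (b : ℕ → α) : IsClosedEmbedding fun a => interleave a b :=
  LeftInverse.isClosedEmbedding (f := fun q n => q (2 * n)) (fun a => by simp) (by fun_prop)
    (continuous_interleave.comp (.prodMk_left b))

end Interleave

section DistSeq

variable {X : Type*} [MetricSpace X]

def distSeq (u : ℕ → X) (x : X) : ℕ → ℝ := fun n => dist x (u n)

lemma continuous_distSeq (u : ℕ → X) : Continuous (distSeq u) :=
  continuous_pi fun _ => continuous_id.dist continuous_const

variable {u : ℕ → X}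

lemma isEmbedding_distSeq (hu : DenseRange u) : IsEmbedding (distSeq u) := by
  refine IsInducing.isEmbedding <| isInducing_iff_nhds.2 fun x =>
    le_antisymm ((continuous_distSeq u).tendsto x).le_comap ?_
  refine Metric.nhds_basis_ball.ge_iff.2 fun ε hε => ?_
  obtain ⟨n, hn⟩ := hu.exists_dist_lt x (half_pos hε)
  refine mem_comap.2 ⟨{a | a n < ε / 2},
    (isOpen_lt (continuous_apply n) continuous_const).mem_nhds hn, fun y hy => ?_⟩
  calc dist y x ≤ dist y (u n) + dist x (u n) := dist_triangle_right _ _ _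
    _ < ε := by simp only [mem_preimage, mem_ofPred_eq, distSeq] at hy; linarith

lemma cauchySeq_of_tendsto_distSeq {x : ℕ → X} {a : ℕ → ℝ}
    (hx : Tendsto (fun j => distSeq u (x j)) atTop (𝓝 a)) (ha : ∀ ε > 0, ∃ n, a n < ε) :
    CauchySeq x := by
  refine Metric.cauchySeq_iff.2 fun ε hε => ?_
  obtain ⟨n, hn⟩ := ha (ε / 2) (half_pos hε)
  obtain ⟨N, hN⟩ := eventually_atTop.1 ((tendsto_pi_nhds.1 hx n).eventually_lt_const hn)
  refine ⟨N, fun i hi j hj => ?_⟩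
  have hi' : dist (x i) (u n) < ε / 2 := hN i hi
  have hj' : dist (x j) (u n) < ε / 2 := hN j hj
  linarith [dist_triangle_right (x i) (x j) (u n)]

theorem isClosedEmbedding_distSeq_prod [CompleteSpace X] (hu : DenseRange u)
    (φ : ℕ → C(ℕ → ℝ, ℝ)) (hφ : ∀ k a, φ k a = 0 ↔ ∀ n, 1 / ((k : ℝ) + 1) ≤ a n) :
    IsClosedEmbedding fun x => (distSeq u x, fun k => (φ k (distSeq u x))⁻¹) := by
  have hφ_ne (k : ℕ) (x : X) : φ k (distSeq u x) ≠ 0 := fun h => by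
    obtain ⟨n, hn⟩ := hu.exists_dist_lt x (Nat.one_div_pos_of_nat (n := k))
    exact ((hφ k _).1 h n).not_gt hn
  set G := fun x => (distSeq u x, fun k => (φ k (distSeq u x))⁻¹)
  have hG : Continuous G := (continuous_distSeq u).prodMk <| continuous_pi fun k =>
    ((φ k).continuous.comp (continuous_distSeq u)).inv₀ (hφ_ne k)
  refine ⟨.of_comp hG continuous_fst (isEmbedding_distSeq hu), ?_⟩
  refine IsSeqClosed.isClosed fun x p hx hp => ?_
  choose y hy using hx
  obtain rfl : x = G ∘ y := funext fun j => (hy j).symm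
  have h1 : Tendsto (fun j => distSeq u (y j)) atTop (𝓝 p.1) := (continuous_fst.tendsto p).comp hp
  have h2 (k : ℕ) : Tendsto (fun j => (φ k (distSeq u (y j)))⁻¹) atTop (𝓝 (p.2 k)) :=
    (((continuous_apply k).comp continuous_snd).tendsto p).comp hp
  have hφp (k : ℕ) : φ k p.1 ≠ 0 := by
    have hlim := (((φ k).continuous.tendsto p.1).comp h1).mul (h2 k)
    refine left_ne_zero_of_mul_eq_one (tendsto_nhds_unique hlim ?_)
    exact tendsto_const_nhds.congr fun j => (mul_inv_cancel₀ (hφ_ne k (y j))).symm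
  have hp1 (ε : ℝ) (hε : 0 < ε) : ∃ n, p.1 n < ε := by
    obtain ⟨k, hk⟩ := exists_nat_one_div_lt hε
    obtain ⟨n, hn⟩ : ∃ n, p.1 n < 1 / ((k : ℝ) + 1) := by simpa [hφ] using hφp k
    exact ⟨n, hn.trans hk⟩
  obtain ⟨z, hz⟩ := cauchySeq_tendsto_of_complete (cauchySeq_of_tendsto_distSeq h1 hp1)
  exact ⟨z, tendsto_nhds_unique ((hG.tendsto z).comp hz) hp⟩

end DistSeq

theorem exists_isClosedEmbedding_nat_real (X : Type*) [TopologicalSpace X] [PolishSpace X] :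
    ∃ f : X → ℕ → ℝ, IsClosedEmbedding f := by
  rcases isEmpty_or_nonempty X with hX | hX
  · exact ⟨isEmptyElim, .of_subsingleton _, by simp [range_eq_empty]⟩
  let := upgradeIsCompletelyMetrizable X
  obtain ⟨u, hu⟩ := exists_dense_seq X
  have hclosed (k : ℕ) : IsClosed {a : ℕ → ℝ | ∀ n, 1 / ((k : ℝ) + 1) ≤ a n} := by
    simp only [ofPred_forall]
    exact isClosed_iInter fun n => isClosed_le continuous_const (continuous_apply n)
  choose φ hφ using fun k =>
    perfectlyNormalSpace_iff_forall_isClosed_preimage_zero.1 inferInstance _ (hclosed k)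
  exact ⟨_, isClosedEmbedding_interleave.comp
    (isClosedEmbedding_distSeq_prod hu φ fun k a => (Set.ext_iff.1 (hφ k).1 a).symm)⟩

lemma dSeq_update_le_s11 (x : ℕ → ℝ) (k : ℕ) (c : ℝ) : dSeq (update x k c) x ≤ 2 ^ (-(k : ℤ)) := by
  rw [dSeq, tsum_eq_single k fun n hn => by simp [update_of_ne hn]]
  exact mul_le_of_le_one_right (by positivity) (min_le_left _ _)

theorem stmt11 (X : Type*) [TopologicalSpace X] [PolishSpace X] :
    ∃ Z : Set (ℕ → ℝ), IsClosed Z ∧ Nonempty (X ≃ₜ Z) ∧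
      ∀ ε > (0 : ℝ), ∃ g : (ℕ → ℝ) → (ℕ → ℝ), Continuous g ∧
        (∀ x, dSeq (g x) x ≤ ε) ∧ ∀ x, g x ∉ Z := by
  obtain ⟨f, hf⟩ := exists_isClosedEmbedding_nat_real X
  have hF := (isClosedEmbedding_interleave_left 0).comp hf
  refine ⟨range _, hF.isClosed_range, ⟨hF.isEmbedding.toHomeomorph⟩, fun ε hε => ?_⟩
  obtain ⟨k, hk⟩ := exists_pow_lt_of_lt_one hε one_half_lt_one
  refine ⟨fun y => update y (2 * k + 1) 1, continuous_id.update _ continuous_const, fun y => ?_, ?_⟩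
  · calc dSeq _ y ≤ 2 ^ (-((2 * k + 1 : ℕ) : ℤ)) := dSeq_update_le_s11 y _ 1
      _ ≤ 2 ^ (-(k : ℤ)) := zpow_le_zpow_right₀ one_le_two (by omega)
      _ = (1 / 2) ^ k := by rw [zpow_neg, zpow_natCast, one_div, inv_pow]
      _ ≤ ε := hk.le
  · rintro y ⟨x, hx⟩
    simpa using congrFun hx (2 * k + 1)
end

section
/- Let c₀₀ denote the set of finitely supported sequences x : ℕ → ℝ, equipped with the supremum metric d(x,y) = sup_n |x n − y n|. For every compact K ⊆ c₀₀, every m ∈ ℕ, every continuous map f : [0,1]^m → c₀₀ and every ε > 0, there exists a continuous map g : [0,1]^m → c₀₀ with d(g(p), f(p)) ≤ ε for all p ∈ [0,1]^m and with image disjoint from K. -/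
open BoundedContinuousFunction

/-- `c₀₀`: the finitely supported sequences `ℕ → ℝ`, as a subspace of the bounded
functions `ℕ →ᵇ ℝ` with the supremum metric `d(x,y) = sup_n |x n - y n|`. -/
def c00 : Set (ℕ →ᵇ ℝ) := {x | Set.Finite {n | x n ≠ 0}}

theorem stmt13 (K : Set (ℕ →ᵇ ℝ)) (hK : K ⊆ c00) (hKc : IsCompact K)
    (m : ℕ) (f : (Fin m → unitInterval) → c00) (hf : Continuous f) :
    ∀ ε > (0 : ℝ), ∃ g : (Fin m → unitInterval) → c00, Continuous g ∧
      (∀ p, dist (g p) (f p) ≤ ε) ∧ ∀ p, (g p : ℕ →ᵇ ℝ) ∉ K := by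
  intro ε hε
  -- The set F = K ∪ range (f) is compact and contained in c₀₀.
  set F : Set (ℕ →ᵇ ℝ) := K ∪ Set.range (fun p => (f p : ℕ →ᵇ ℝ)) with hF
  have hfc : Continuous fun p => (f p : ℕ →ᵇ ℝ) := continuous_subtype_val.comp hf
  have hFc : IsCompact F := hKc.union (isCompact_range hfc)
  have hFsub : F ⊆ c00 := by
    rintro x (hx | ⟨p, rfl⟩)
    · exact hK hx
    · exact (f p).2
  -- Find a finite ε/4-net of F with centers in F.
  have hd : {q : (ℕ →ᵇ ℝ) × (ℕ →ᵇ ℝ) | dist q.1 q.2 < ε / 4} ∈ uniformity (ℕ →ᵇ ℝ) :=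
    Metric.dist_mem_uniformity (by linarith)
  obtain ⟨t, htF, htfin, htcov⟩ := totallyBounded_iff_subset.1 hFc.totallyBounded _ hd
  -- Choose n outside all supports of the net points.
  have hUfin : Set.Finite (⋃ c ∈ t, {n | (c : ℕ →ᵇ ℝ) n ≠ 0}) :=
    Set.Finite.biUnion htfin fun c hc => hFsub (htF hc)
  obtain ⟨n, hn⟩ := Set.Infinite.nonempty ((Set.infinite_univ.diff hUfin))
  have hn' : ∀ c ∈ t, (c : ℕ →ᵇ ℝ) n = 0 := by
    intro c hc
    by_contra h
    exact hn.2 (Set.mem_biUnion hc h)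
  -- All elements of F have small n-th coordinate.
  have hsmall : ∀ x ∈ F, |x n| < ε / 4 := by
    intro x hx
    obtain ⟨c, hc, hxc⟩ := Set.mem_iUnion₂.1 (htcov hx)
    have : dist x c < ε / 4 := hxc
    have h1 : dist (x n) (c n) ≤ dist x c := BoundedContinuousFunction.dist_coe_le_dist n
    rw [hn' c hc] at h1
    calc |x n| = dist (x n) 0 := by simp [Real.dist_eq]
    _ ≤ dist x c := h1
    _ < ε / 4 := this
  -- The bump function e = ε · δ_n.
  set e : ℕ →ᵇ ℝ := ofNormedAddCommGroupDiscrete (fun k => if k = n then ε else 0) ε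
    (by intro k; by_cases h : k = n <;> simp [h, abs_of_pos hε, le_of_lt hε]) with he
  have he_apply : ∀ k, e k = if k = n then ε else 0 := fun k => rfl
  -- Define g.
  have hmem : ∀ p, ((f p : ℕ →ᵇ ℝ) + e) ∈ c00 := by
    intro p
    have : {k | ((f p : ℕ →ᵇ ℝ) + e) k ≠ 0} ⊆ {k | (f p : ℕ →ᵇ ℝ) k ≠ 0} ∪ {n} := by
      intro k hk
      by_cases h : k = n
      · exact Or.inr h
      · left
        simp only [Set.mem_setOf_eq, BoundedContinuousFunction.coe_add, Pi.add_apply] at hk ⊢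
        rw [he_apply k, if_neg h, add_zero] at hk
        exact hk
    exact Set.Finite.subset (((f p).2).union (Set.finite_singleton n)) this
  refine ⟨fun p => ⟨(f p : ℕ →ᵇ ℝ) + e, hmem p⟩, ?_, ?_, ?_⟩
  · exact Continuous.subtype_mk (hfc.add continuous_const) _
  · intro p
    have : dist ((f p : ℕ →ᵇ ℝ) + e) (f p : ℕ →ᵇ ℝ) ≤ ε := by
      rw [BoundedContinuousFunction.dist_le (le_of_lt hε)]
      intro k
      simp only [BoundedContinuousFunction.coe_add, Pi.add_apply]
      rw [Real.dist_eq, add_sub_cancel_left, he_apply k]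
      by_cases h : k = n <;> simp [h, le_of_lt hε, abs_of_pos hε]
    exact this
  · intro p hmemK
    have h1 : |((f p : ℕ →ᵇ ℝ) + e) n| < ε / 4 := hsmall _ (Or.inl hmemK)
    have h2 : |(f p : ℕ →ᵇ ℝ) n| < ε / 4 := hsmall _ (Or.inr ⟨p, rfl⟩)
    have h3 : ((f p : ℕ →ᵇ ℝ) + e) n = (f p : ℕ →ᵇ ℝ) n + ε := by
      simp [he_apply n]
    rw [h3] at h1
    have := abs_le.1 (le_of_lt h2)
    have := abs_le.1 (le_of_lt h1)
    cases' this with a b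
    linarith [this.1]
end

section
/- Let c₀₀ denote the set of finitely supported sequences x : ℕ → ℝ, equipped with the supremum metric d(x,y) = sup_n |x n − y n|. For every m ∈ ℕ, all continuous maps f₁, f₂ : [0,1]^m → c₀₀ and every ε > 0, there exist continuous maps g₁, g₂ : [0,1]^m → c₀₀ such that d(gᵢ(p), fᵢ(p)) ≤ ε for all p ∈ [0,1]^m and i ∈ {1,2}, and the images g₁([0,1]^m) and g₂([0,1]^m) are disjoint. -/
open BoundedContinuousFunction

/-- Truncation to the first `N` coordinates. -/
noncomputable def trunc (N : ℕ) (x : ℕ →ᵇ ℝ) : ℕ →ᵇ ℝ :=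
  BoundedContinuousFunction.ofNormedAddCommGroup
    (fun n => if n < N then x n else 0) continuous_of_discreteTopology ‖x‖
    (by
      intro n
      by_cases h : n < N
      · simpa [h] using x.norm_coe_le_norm n
      · simp [h, norm_nonneg])

@[simp] lemma trunc_apply (N : ℕ) (x : ℕ →ᵇ ℝ) (n : ℕ) :
    trunc N x n = if n < N then x n else 0 := rfl

lemma trunc_lipschitz (N : ℕ) : LipschitzWith 1 (trunc N) := by
  refine LipschitzWith.of_dist_le_mul fun x y => ?_
  rw [NNReal.coe_one, one_mul]
  refine (BoundedContinuousFunction.dist_le dist_nonneg).2 fun n => ?_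
  by_cases h : n < N
  · simpa [h] using x.dist_coe_le_dist (g := y) n
  · simp [h, dist_nonneg]

/-- The delta function at `N` with value `a`. -/
noncomputable def deltaBCF (N : ℕ) (a : ℝ) : ℕ →ᵇ ℝ :=
  BoundedContinuousFunction.ofNormedAddCommGroup
    (fun n => if n = N then a else 0) continuous_of_discreteTopology |a|
    (by
      intro n
      by_cases h : n = N <;> simp [h, abs_nonneg])

@[simp] lemma deltaBCF_apply (N : ℕ) (a : ℝ) (n : ℕ) :
    deltaBCF N a n = if n = N then a else 0 := rfl

theorem stmt14 (m : ℕ) (f₁ f₂ : (Fin m → unitInterval) → c00)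
    (hf₁ : Continuous f₁) (hf₂ : Continuous f₂) :
    ∀ ε > (0 : ℝ), ∃ g₁ g₂ : (Fin m → unitInterval) → c00,
      Continuous g₁ ∧ Continuous g₂ ∧
      (∀ p, dist (g₁ p) (f₁ p) ≤ ε) ∧ (∀ p, dist (g₂ p) (f₂ p) ≤ ε) ∧
      Disjoint (Set.range g₁) (Set.range g₂) := by
  intro ε hε
  have hε2 : (0:ℝ) < ε / 2 := by linarith
  -- the union of the two images, a compact set
  set s : Set (ℕ →ᵇ ℝ) :=
    Set.range (fun p => (f₁ p : ℕ →ᵇ ℝ)) ∪ Set.range (fun p => (f₂ p : ℕ →ᵇ ℝ)) with hs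
  have hsc00 : s ⊆ c00 := by
    rintro x (⟨p, rfl⟩ | ⟨p, rfl⟩)
    · exact (f₁ p).2
    · exact (f₂ p).2
  have hcomp : IsCompact s :=
    (isCompact_range (continuous_subtype_val.comp hf₁)).union
      (isCompact_range (continuous_subtype_val.comp hf₂))
  obtain ⟨t, hts, htfin, hcov⟩ :=
    Metric.finite_approx_of_totallyBounded hcomp.totallyBounded (ε/2) hε2
  -- the supports of the (finitely many) centers are jointly bounded
  have hUfin : Set.Finite (⋃ c ∈ t, {n | c n ≠ 0}) :=
    Set.Finite.biUnion htfin fun c hc => hsc00 (hts hc)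
  obtain ⟨B, hB⟩ := hUfin.bddAbove
  set N : ℕ := B + 1 with hN
  -- beyond N, every element of s is small
  have hsmall : ∀ x ∈ s, ∀ n, N ≤ n → |x n| ≤ ε / 2 := by
    intro x hx n hn
    obtain ⟨c, hct, hxc⟩ := Set.mem_iUnion₂.1 (hcov hx)
    have hcn : c n = 0 := by
      by_contra h
      have : n ∈ ⋃ c ∈ t, {n | c n ≠ 0} := Set.mem_iUnion₂.2 ⟨c, hct, h⟩
      have := hB this
      omega
    have := BoundedContinuousFunction.dist_coe_le_dist (f := x) (g := c) n
    rw [Real.dist_eq, hcn, sub_zero] at this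
    exact this.trans (le_of_lt (Metric.mem_ball.1 hxc))
  -- truncation is ε/2-close on s
  have htr : ∀ x ∈ s, dist (trunc N x) x ≤ ε / 2 := by
    intro x hx
    refine (BoundedContinuousFunction.dist_le (le_of_lt hε2)).2 fun n => ?_
    by_cases h : n < N
    · simp [h, le_of_lt hε2]
    · rw [Real.dist_eq]
      simp only [trunc_apply, if_neg h, zero_sub, abs_neg]
      exact hsmall x hx n (le_of_not_gt h)
  -- definitions of g₁ and g₂
  have hmem₁ : ∀ x : ℕ →ᵇ ℝ, trunc N x ∈ c00 := by
    intro x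
    refine Set.Finite.subset (Set.finite_Iio N) fun n hn => ?_
    simp only [Set.mem_setOf_eq, trunc_apply] at hn
    by_contra h
    simp [Set.mem_Iio, not_lt] at h
    exact hn (if_neg (not_lt.2 h))
  have hmem₂ : ∀ x : ℕ →ᵇ ℝ, trunc N x + deltaBCF N (ε/2) ∈ c00 := by
    intro x
    refine Set.Finite.subset (Set.finite_Iic N) fun n hn => ?_
    simp only [Set.mem_setOf_eq, BoundedContinuousFunction.coe_add, Pi.add_apply,
      trunc_apply, deltaBCF_apply] at hn
    by_contra h
    simp only [Set.mem_Iic, not_le] at h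
    rw [if_neg (by omega), if_neg (by omega)] at hn
    exact hn (by ring)
  refine ⟨fun p => ⟨trunc N (f₁ p), hmem₁ _⟩,
    fun p => ⟨trunc N (f₂ p) + deltaBCF N (ε/2), hmem₂ _⟩, ?_, ?_, ?_, ?_, ?_⟩
  · exact Continuous.subtype_mk
      ((trunc_lipschitz N).continuous.comp (continuous_subtype_val.comp hf₁)) _
  · exact Continuous.subtype_mk
      ((((trunc_lipschitz N).continuous.comp (continuous_subtype_val.comp hf₂)).add
        continuous_const)) _
  · intro p
    rw [Subtype.dist_eq]
    exact le_trans (htr _ (Or.inl ⟨p, rfl⟩)) (by linarith)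
  · intro p
    rw [Subtype.dist_eq]
    calc dist (trunc N (f₂ p) + deltaBCF N (ε/2)) ((f₂ p : ℕ →ᵇ ℝ))
        ≤ dist (trunc N (f₂ p) + deltaBCF N (ε/2)) (trunc N (f₂ p))
            + dist (trunc N (f₂ p)) (f₂ p : ℕ →ᵇ ℝ) := dist_triangle _ _ _
      _ ≤ ε/2 + ε/2 := by
          refine add_le_add ?_ (htr _ (Or.inr ⟨p, rfl⟩))
          refine (BoundedContinuousFunction.dist_le (le_of_lt hε2)).2 fun n => ?_
          simp only [BoundedContinuousFunction.coe_add, Pi.add_apply, Real.dist_eq,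
            add_sub_cancel_left, deltaBCF_apply]
          by_cases h : n = N <;> simp [h, le_of_lt hε2, abs_of_pos hε2]
      _ = ε := by ring
  · rw [Set.disjoint_left]
    rintro x ⟨p, rfl⟩ ⟨q, hq⟩
    have h1 : (trunc N (f₁ p) : ℕ →ᵇ ℝ) N = 0 := by simp
    have h2 : (trunc N (f₂ q) + deltaBCF N (ε/2) : ℕ →ᵇ ℝ) N = ε/2 := by simp
    have := congrArg (fun y : c00 => (y : ℕ →ᵇ ℝ) N) hq
    simp only [h1, h2] at this
    linarith
end

section
/- A separable metrizable topological space X is σ-compact (i.e., a countable union of its compact subsets) if and only if for every metrizable space Y and every topological embedding e : X → Y, the image e(X) is an Fσ subset of Y, i.e., a countable union of closed subsets of Y. -/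
universe u

open Set Topology TopologicalSpace

/-- A product of embeddings is an embedding. -/
lemma isEmbedding_piMap_aux {ι : Type*} {π : ι → Type*} {Y : ι → Type*}
    [∀ i, TopologicalSpace (π i)] [∀ i, TopologicalSpace (Y i)]
    {f : ∀ i, π i → Y i} (hf : ∀ i, IsEmbedding (f i)) :
    IsEmbedding (fun (x : ∀ i, π i) i => f i (x i)) := by
  refine ⟨⟨?_⟩, fun x y h => funext fun i => (hf i).injective (congrFun h i)⟩
  have h1 : ∀ i, (inferInstance : TopologicalSpace (π i)) =
      TopologicalSpace.induced (f i) inferInstance := fun i => (hf i).1.eq_induced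
  show Pi.topologicalSpace = _
  conv_lhs => rw [Pi.topologicalSpace]
  conv_rhs => rw [Pi.topologicalSpace]
  simp only [induced_iInf, induced_compose]
  refine iInf_congr fun i => ?_
  have hc : ((fun v : ∀ j, Y j => v i) ∘ fun (x : ∀ j, π j) j => f j (x j))
      = f i ∘ (fun x : ∀ j, π j => x i) := rfl
  rw [hc, ← induced_compose, ← h1 i]

/-- A separable metric space embeds in `ℕ → ℝ` (product topology). -/
lemma exists_isEmbedding_nat_real (X : Type u) [MetricSpace X]
    [TopologicalSpace.SeparableSpace X] [Nonempty X] :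
    ∃ f : X → ℕ → ℝ, IsEmbedding f := by
  obtain ⟨u, hu⟩ := TopologicalSpace.exists_dense_seq X
  refine ⟨fun x n => dist x (u n), ?_⟩
  have hcont : Continuous fun x : X => fun n => dist x (u n) :=
    continuous_pi fun n => (continuous_id.dist continuous_const)
  have hinj : Function.Injective fun x : X => fun n => dist x (u n) := by
    intro x y h
    have hd : ∀ n, dist x (u n) = dist y (u n) := fun n => congrFun h n
    have : ∀ ε > (0:ℝ), dist x y < ε := by
      intro ε hε
      obtain ⟨n, hn⟩ := Metric.denseRange_iff.1 hu x (ε / 2) (by linarith)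
      calc dist x y ≤ dist x (u n) + dist (u n) y := dist_triangle _ _ _
        _ = dist x (u n) + dist y (u n) := by rw [dist_comm (u n) y]
        _ = dist x (u n) + dist x (u n) := by rw [hd n]
        _ < ε / 2 + ε / 2 := by linarith
        _ = ε := by ring
    have h0 : dist x y ≤ 0 := by
      by_contra hpos
      push_neg at hpos
      exact lt_irrefl _ (this _ hpos)
    exact dist_le_zero.1 h0
  refine ⟨isInducing_iff_nhds.2 fun x => le_antisymm ?_ ?_, hinj⟩
  · exact (hcont.tendsto x).le_comap
  · refine (Metric.nhds_basis_ball (x := x)).ge_iff.2 fun ε hε => ?_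
    obtain ⟨n, hn⟩ := Metric.denseRange_iff.1 hu x (ε / 3) (by linarith)
    refine Filter.mem_comap.2 ⟨(fun g : ℕ → ℝ => g n) ⁻¹' Metric.ball (dist x (u n)) (ε / 3),
      (continuous_apply n).continuousAt.preimage_mem_nhds
        (Metric.ball_mem_nhds _ (by linarith)), ?_⟩
    · intro y hy
      simp only [Set.mem_preimage, Metric.mem_ball, Real.dist_eq] at hy
      have : dist y (u n) < dist x (u n) + ε / 3 := by
        have h1 := abs_lt.1 hy
        linarith [h1.1, h1.2]
      calc dist y x ≤ dist y (u n) + dist (u n) x := dist_triangle _ _ _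
        _ = dist y (u n) + dist x (u n) := by rw [dist_comm (u n) x]
        _ < (dist x (u n) + ε / 3) + dist x (u n) := by linarith
        _ < (ε/3 + ε/3) + ε/3 := by linarith
        _ = ε := by ring

theorem stmt17 {X : Type u} [TopologicalSpace X] [TopologicalSpace.MetrizableSpace X]
    [TopologicalSpace.SeparableSpace X] :
    (∃ K : ℕ → Set X, (∀ n, IsCompact (K n)) ∧ (⋃ n, K n) = Set.univ) ↔
      ∀ (Y : Type u) [TopologicalSpace Y] [TopologicalSpace.MetrizableSpace Y],
        ∀ e : X → Y, Topology.IsEmbedding e →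
          ∃ F : ℕ → Set Y, (∀ n, IsClosed (F n)) ∧ e '' Set.univ = ⋃ n, F n := by
  constructor
  · rintro ⟨K, hK, hKU⟩ Y _ _ e he
    refine ⟨fun n => e '' K n, fun n => ((hK n).image he.continuous).isClosed, ?_⟩
    rw [← hKU, Set.image_iUnion]
  · intro h
    cases isEmpty_or_nonempty X with
    | inl hempty =>
      refine ⟨fun _ => ∅, fun _ => isCompact_empty, ?_⟩
      simp [Set.univ_eq_empty_iff.2 hempty]
    | inr hne =>
      letI : MetricSpace X := TopologicalSpace.metrizableSpaceMetric X
      obtain ⟨f, hf⟩ := exists_isEmbedding_nat_real X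
      -- embed ℝ into Icc (-1) 1 coordinatewise
      let h' : ℝ ≃o Set.Ioo (-1 : ℝ) 1 := orderIsoIooNegOneOne ℝ
      have hh' : IsEmbedding fun t : ℝ => (Set.inclusion Set.Ioo_subset_Icc_self (h' t) :
          Set.Icc (-1:ℝ) 1) :=
        (Topology.IsEmbedding.inclusion (Set.Ioo_subset_Icc_self (a := (-1:ℝ)) (b := 1))).comp h'.toHomeomorph.isEmbedding
      let g : (ℕ → ℝ) → (ℕ → Set.Icc (-1:ℝ) 1) :=
        fun v n => Set.inclusion Set.Ioo_subset_Icc_self (h' (v n))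
      have hg : IsEmbedding g := isEmbedding_piMap_aux fun _ => hh'
      let Z := ℕ → Set.Icc (-1:ℝ) 1
      let e : X → ULift.{u} Z := fun x => ULift.up (g (f x))
      have he : IsEmbedding e :=
        ((Homeomorph.ulift (X := Z)).symm.isEmbedding).comp (hg.comp hf)
      haveI : TopologicalSpace.MetrizableSpace (ULift.{u} Z) :=
        (Homeomorph.ulift (X := Z)).isEmbedding.metrizableSpace
      haveI : CompactSpace (ULift.{u} Z) :=
        (Homeomorph.ulift (X := Z)).symm.compactSpace
      obtain ⟨F, hFc, hFU⟩ := h (ULift.{u} Z) e he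
      have hsub : ∀ n, F n ⊆ Set.range e := by
        intro n y hy
        have : y ∈ ⋃ n, F n := Set.mem_iUnion.2 ⟨n, hy⟩
        rw [← hFU, Set.image_univ] at this
        exact this
      refine ⟨fun n => e ⁻¹' F n, fun n => ?_, ?_⟩
      · rw [he.isCompact_iff]
        rw [Set.image_preimage_eq_of_subset (hsub n)]
        exact (hFc n).isCompact
      · apply Set.eq_univ_of_univ_subset
        intro x _
        have : e x ∈ ⋃ n, F n := by
          rw [← hFU]; exact Set.mem_image_of_mem e (Set.mem_univ x)
        obtain ⟨n, hn⟩ := Set.mem_iUnion.1 this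
        exact Set.mem_iUnion.2 ⟨n, hn⟩
end
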